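/- (Monotonicity along the extended Hamiltonian flow) Let α ∈ ℝ and let (x,p,u) : I → ℝⁿ × ℝⁿ × ℝ be C¹ on an interval I and satisfy x'(t) = ∂_p H(x(t),p(t),t), p'(t) = −∂_x H(x(t),p(t),t) − f(t) p(t), and u'(t) = ⟨∂_p H(x(t),p(t),t), p(t)⟩ − H(x(t),p(t),t) + α − f(t) u(t) for all t ∈ I. Then the function t ↦ e^{F(t)} (u_α⁻(x(t),t) − u(t)) is non-increasing on I. In particular, if u(t₀) ≥ u_α⁻(x(t₀),t₀) for some t₀ ∈ I, then u(t) ≥ u_α⁻(x(t),t) for all t ∈ I with t ≥ t₀. -/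

import Mathlib

open MeasureTheory Real Filter
open scoped RealInnerProductSpace

noncomputable section

/-- `ℝⁿ` with the Euclidean norm. -/
abbrev Evec (n : ℕ) : Type := EuclideanSpace ℝ (Fin n)

/-- The vector of `Evec n` with integer coordinates `k`. -/
def intVec {n : ℕ} (k : Fin n → ℤ) : Evec n := WithLp.toLp 2 (fun i => (k i : ℝ))

/-- `γ` is absolutely continuous on the interval `S` with derivative `γ'`:
on any subinterval of `S` it is the indefinite integral of the locally
integrable function `γ'`. -/
def ACOn {n : ℕ} (γ γ' : ℝ → Evec n) (S : Set ℝ) : Prop :=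
  ∀ a ∈ S, ∀ b ∈ S,
    IntervalIntegrable γ' MeasureTheory.volume a b ∧ γ b = γ a + ∫ τ in a..b, γ' τ

/-- The set of (finite) actions `∫_{-∞}^t e^{F(s)-F(t)} (L + α)` of admissible
absolutely continuous curves `γ : (-∞, t] → ℝⁿ` with `γ t = x`. -/
def wkSet {n : ℕ} (F : ℝ → ℝ) (L : Evec n → Evec n → ℝ → ℝ) (α : ℝ)
    (x : Evec n) (t : ℝ) : Set ℝ :=
  { r | ∃ γ γ' : ℝ → Evec n, ACOn γ γ' (Set.Iic t) ∧ γ t = x ∧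
      MeasureTheory.IntegrableOn
        (fun s => Real.exp (F s - F t) * (L (γ s) (γ' s) s + α)) (Set.Iic t) ∧
      r = ∫ s in Set.Iic t, Real.exp (F s - F t) * (L (γ s) (γ' s) s + α) }

/-- The weak KAM solution `u_α⁻(x,t)`. -/
def uWK {n : ℕ} (F : ℝ → ℝ) (L : Evec n → Evec n → ℝ → ℝ) (α : ℝ)
    (x : Evec n) (t : ℝ) : ℝ :=
  sInf (wkSet F L α x t)

/-- The conjugate Tonelli Hamiltonian `H(x,p,t) = sup_v (⟨p,v⟩ - L(x,v,t))`. -/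
def Ham {n : ℕ} (L : Evec n → Evec n → ℝ → ℝ) (x p : Evec n) (t : ℝ) : ℝ :=
  ⨆ v : Evec n, (⟪p, v⟫ - L x v t)

/-!
Given an admissible curve for `u_α⁻(X a, a)`, continuing it by `X` on `[a, b]` gives an admissible
curve for `u_α⁻(X b, b)`, whence
`e^{F b} u_α⁻(X b, b) ≤ e^{F a} u_α⁻(X a, a) + ∫ₐᵇ e^{F} (L(X, X', ·) + α)`.
Along the extended flow `X' = ∂ₚH(X, P, ·)` is the maximiser in the Legendre transform, so
`L(X, X', ·) = ⟨X', P⟩ - H(X, P, ·)`, and the equation for `U` says precisely that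
`(e^F U)' = e^F (L(X, X', ·) + α)`; subtracting the two gives the monotonicity.
The maximiser is unique by strict convexity, hence continuous by Berge's maximum theorem, and a
continuous subgradient selection is the gradient. Since `F(t) - [f] t` is bounded and `[f] > 0`,
`e^F` is integrable on every `(-∞, t]`, which makes the action of constant curves finite.
-/

open Set Topology
open scoped Interval

theorem strictConvexOn_univ_of_iteratedFDeriv_two_pos {E : Type*} [NormedAddCommGroup E]
    [NormedSpace ℝ E] {g : E → ℝ} (hg : ContDiff ℝ 2 g)
    (hpos : ∀ v w, w ≠ 0 → 0 < iteratedFDeriv ℝ 2 g v ![w, w]) :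
    StrictConvexOn ℝ univ g := by
  refine ⟨convex_univ, fun x _ y _ hxy a b ha hb hab => ?_⟩
  set d := y - x
  let ℓ : ℝ →L[ℝ] E := ContinuousLinearMap.toSpanSingleton ℝ d
  have hline : StrictConvexOn ℝ univ ((fun z => g (x + z)) ∘ ℓ) := by
    have hgx : ContDiff ℝ 2 (fun z => g (x + z)) := hg.comp (contDiff_const.add contDiff_id)
    refine strictConvexOn_univ_of_deriv2_pos (hgx.comp ℓ.contDiff).continuous fun θ => ?_
    have hvec : ![d, d] = fun _ => ℓ 1 := by ext i; fin_cases i <;> simp [ℓ]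
    rw [← iteratedDeriv_eq_iterate, iteratedDeriv_eq_iteratedFDeriv,
      ℓ.iteratedFDeriv_comp_right hgx θ le_rfl, iteratedFDeriv_comp_add_left]
    simpa [hvec] using hpos (x + ℓ θ) d (sub_ne_zero.2 hxy.symm)
  have hxy' : a • x + b • y = x + (a • (0 : ℝ) + b • 1) • d := by
    simp only [d, smul_eq_mul, mul_zero, zero_add, mul_one, smul_sub]
    rw [eq_sub_of_add_eq hab]
    module
  simpa [ℓ, d, hxy'] using hline.2 (mem_univ 0) (mem_univ 1) zero_ne_one ha hb hab

theorem exists_forall_inner_sub_le {E : Type*} [NormedAddCommGroup E] [InnerProductSpace ℝ E]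
    [ProperSpace E] {g : E → ℝ} (hg : Continuous g) {k C : ℝ} (hgk : ∀ v, k * ‖v‖ - C ≤ g v)
    {p : E} (hp : ‖p‖ < k) : ∃ v, ∀ u, ⟪p, u⟫ - g u ≤ ⟪p, v⟫ - g v := by
  refine (continuous_const.inner continuous_id |>.sub hg).exists_forall_ge ?_
  have hlin : Tendsto (fun u : E => C - (k - ‖p‖) * ‖u‖) (cocompact E) atBot :=
    tendsto_atBot_add_const_left _ C
      (tendsto_neg_atTop_atBot.comp (tendsto_norm_cocompact_atTop.const_mul_atTop (sub_pos.2 hp)))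
  refine tendsto_atBot_mono (fun u => ?_) hlin
  simp only [Pi.sub_apply, id]
  nlinarith [real_inner_le_norm p u, hgk u, norm_nonneg u]

theorem norm_le_of_forall_inner_sub_le {E : Type*} [NormedAddCommGroup E]
    [InnerProductSpace ℝ E] {g : E → ℝ} {k C : ℝ} (hgk : ∀ v, k * ‖v‖ - C ≤ g v) {p v : E}
    (hp : ‖p‖ + 1 ≤ k) (hv : ∀ u, ⟪p, u⟫ - g u ≤ ⟪p, v⟫ - g v) : ‖v‖ ≤ C + g 0 := by
  have h0 := hv 0
  rw [inner_zero_right] at h0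
  nlinarith [real_inner_le_norm p v, hgk v, norm_nonneg v]

/-- Berge's maximum theorem, for unique maximisers. -/
theorem continuous_argmax_of_unique {Q E : Type*} [TopologicalSpace Q] [TopologicalSpace E]
    {g : Q × E → ℝ} (hg : Continuous g) {V : Q → E} (hV : ∀ q u, g (q, u) ≤ g (q, V q))
    (huniq : ∀ q w, (∀ u, g (q, u) ≤ g (q, w)) → w = V q)
    (hloc : ∀ q, ∃ K, IsCompact K ∧ ∀ᶠ q' in 𝓝 q, V q' ∈ K) : Continuous V := by
  refine continuous_iff_continuousAt.2 fun q => ?_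
  obtain ⟨K, hK, hVK⟩ := hloc q
  refine hK.tendsto_nhds_of_unique_mapClusterPt hVK fun w _ hw => huniq q w fun u => ?_
  have hgraph : MapClusterPt (q, w) (𝓝 q) fun q' => (q', V q') := by
    rw [((𝓝 q).basis_sets.prod_nhds (𝓝 w).basis_sets).mapClusterPt_iff_frequently]
    rintro ⟨s, t⟩ ⟨hs, ht⟩
    exact ((hw.frequently ht).and_eventually hs).mono fun q' h => ⟨h.2, h.1⟩
  exact (isClosed_le (hg.comp (continuous_fst.prodMk continuous_const)) hg).mem_of_mapClusterPt
    (s := {z : Q × E | g (z.1, u) ≤ g z}) hgraph (Eventually.of_forall fun q' => hV q' u)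

theorem hasGradientAt_of_subgradient {E : Type*} [NormedAddCommGroup E] [InnerProductSpace ℝ E]
    [CompleteSpace E] {h : E → ℝ} {V : E → E} {p : E}
    (hsub : ∀ p₁ p₂, ⟪V p₁, p₂ - p₁⟫ ≤ h p₂ - h p₁) (hV : ContinuousAt V p) :
    HasGradientAt h (V p) p := by
  rw [hasGradientAt_iff_isLittleO, Asymptotics.isLittleO_iff]
  intro c hc
  filter_upwards [Metric.tendsto_nhds.1 hV c hc] with p' hp'
  have hlow := hsub p p'
  have hup := hsub p' p
  have hclose : ⟪V p' - V p, p' - p⟫ ≤ c * ‖p' - p‖ :=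
    (real_inner_le_norm _ _).trans <|
      mul_le_mul_of_nonneg_right (by rw [← dist_eq_norm]; exact hp'.le) (norm_nonneg _)
  rw [inner_sub_left] at hclose
  rw [← neg_sub p' p, inner_neg_right] at hup
  rw [Real.norm_eq_abs, abs_le]
  constructor <;> nlinarith [norm_nonneg (p' - p)]

theorem integral_eq_sub_of_hasDerivWithinAt_of_ordConnected {E : Type*} [NormedAddCommGroup E]
    [NormedSpace ℝ E] [CompleteSpace E] {f f' : ℝ → E} {I : Set ℝ} (hI : I.OrdConnected)
    (hf : ∀ s ∈ I, HasDerivWithinAt f (f' s) I s) (hf' : ContinuousOn f' I) {a b : ℝ}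
    (ha : a ∈ I) (hb : b ∈ I) : ∫ s in a..b, f' s = f b - f a := by
  have hab : uIcc a b ⊆ I := hI.uIcc_subset ha hb
  refine intervalIntegral.integral_eq_sub_of_hasDeriv_right
    (fun s hs => (hf s (hab hs)).continuousWithinAt.mono hab) (fun s hs => ?_)
    ((hf'.mono hab).intervalIntegrable)
  have hI_nhds : I ∈ 𝓝 s := mem_of_superset (Icc_mem_nhds hs.1 hs.2) hab
  exact ((hf s (mem_of_mem_nhds hI_nhds)).hasDerivAt hI_nhds).hasDerivWithinAt

theorem integrableOn_exp_primitive_Iic {g : ℝ → ℝ} {T : ℝ} (hg : Function.Periodic g T)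
    (hT : 0 < T) (hint : IntervalIntegrable g volume 0 T) (hmean : 0 < ∫ x in 0..T, g x)
    (c : ℝ) : IntegrableOn (fun t => exp (∫ x in 0..t, g x)) (Iic c) := by
  set S := sSup ((fun t => ∫ x in 0..t, g x) '' Icc 0 T)
  have hprim : Continuous fun t => ∫ x in 0..t, g x :=
    intervalIntegral.continuous_primitive (hg.intervalIntegrable₀ hT.ne' hint) 0
  refine ((integrableOn_exp_mul_Iic (div_pos hmean hT) c).const_mul (exp S)).mono'
    hprim.rexp.aestronglyMeasurable.restrict (ae_of_all _ fun t => ?_)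
  have hfloor : (⌊t / T⌋ : ℝ) * ∫ x in 0..T, g x ≤ (∫ x in 0..T, g x) / T * t := by
    rw [div_mul_eq_mul_div, mul_comm, mul_div_assoc]
    exact mul_le_mul_of_nonneg_left (Int.floor_le _) hmean.le
  rw [Real.norm_eq_abs, abs_of_pos (exp_pos _), ← exp_add, exp_le_exp]
  have := hg.integral_le_sSup_add_zsmul_of_pos hint hT t
  rw [zsmul_eq_mul] at this
  linarith

section Lagrangian

variable {n : ℕ}

/-- A selection of maximisers in the definition of `Ham`: the Legendre map `∂ₚH`. -/
def IsLegendreArgmax (L : Evec n → Evec n → ℝ → ℝ) (V : Evec n × Evec n × ℝ → Evec n) : Prop :=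
  ∀ x p t u, ⟪p, u⟫ - L x u t ≤ ⟪p, V (x, p, t)⟫ - L x (V (x, p, t)) t

variable {L : Evec n → Evec n → ℝ → ℝ}

theorem exists_isLegendreArgmax
    (hLc : Continuous fun q : Evec n × Evec n × ℝ => L q.1 q.2.1 q.2.2)
    (hLsuper : ∀ k : ℝ, 0 ≤ k → ∃ C : ℝ, ∀ x v t, k * ‖v‖ - C ≤ L x v t) :
    ∃ V, IsLegendreArgmax L V := by
  have hmax : ∀ q : Evec n × Evec n × ℝ, ∃ v, ∀ u,
      ⟪q.2.1, u⟫ - L q.1 u q.2.2 ≤ ⟪q.2.1, v⟫ - L q.1 v q.2.2 := by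
    rintro ⟨x, p, t⟩
    obtain ⟨C, hC⟩ := hLsuper (‖p‖ + 1) (by positivity)
    exact exists_forall_inner_sub_le (g := fun v => L x v t)
      (hLc.comp (continuous_const.prodMk (continuous_id.prodMk continuous_const)))
      (fun v => hC x v t) (lt_add_one ‖p‖)
  choose V hV using hmax
  exact ⟨V, fun x p t => hV (x, p, t)⟩

namespace IsLegendreArgmax

variable {V : Evec n × Evec n × ℝ → Evec n}

theorem Ham_eq (hV : IsLegendreArgmax L V) (x p : Evec n) (t : ℝ) :
    Ham L x p t = ⟪p, V (x, p, t)⟫ - L x (V (x, p, t)) t :=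
  le_antisymm (ciSup_le (hV x p t))
    (le_ciSup ⟨_, by rintro _ ⟨u, rfl⟩; exact hV x p t u⟩ (V (x, p, t)))

theorem continuous (hV : IsLegendreArgmax L V)
    (hLc : Continuous fun q : Evec n × Evec n × ℝ => L q.1 q.2.1 q.2.2)
    (hLconv : ∀ x t, StrictConvexOn ℝ univ fun v => L x v t)
    (hLsuper : ∀ k : ℝ, 0 ≤ k → ∃ C : ℝ, ∀ x v t, k * ‖v‖ - C ≤ L x v t) : Continuous V := by
  refine continuous_argmax_of_unique (g := fun z => ⟪z.1.2.1, z.2⟫ - L z.1.1 z.2 z.1.2.2)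
    ((continuous_fst.snd.fst.inner continuous_snd).sub
      (hLc.comp (continuous_fst.fst.prodMk (continuous_snd.prodMk continuous_fst.snd.snd))))
    (fun q => hV q.1 q.2.1 q.2.2) (fun q w hw => ?_) fun q => ?_
  · have hconc : StrictConcaveOn ℝ univ fun v => ⟪q.2.1, v⟫ - L q.1 v q.2.2 :=
      (innerₛₗ ℝ q.2.1).concaveOn convex_univ |>.sub_strictConvexOn (hLconv q.1 q.2.2)
    exact hconc.eq_of_isMaxOn (fun u _ => hw u) (fun u _ => hV q.1 q.2.1 q.2.2 u)
      (mem_univ _) (mem_univ _)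
  · obtain ⟨x, p, t⟩ := q
    obtain ⟨C, hC⟩ := hLsuper (‖p‖ + 2) (by positivity)
    refine ⟨Metric.closedBall 0 (C + (L x 0 t + 1)), isCompact_closedBall _ _, ?_⟩
    have hp : ∀ᶠ q' : Evec n × Evec n × ℝ in 𝓝 (x, p, t), ‖q'.2.1‖ < ‖p‖ + 1 :=
      (continuous_norm.comp (by fun_prop)).continuousAt.eventually_lt continuousAt_const
        (lt_add_one _)
    have hL0 : ∀ᶠ q' : Evec n × Evec n × ℝ in 𝓝 (x, p, t), L q'.1 0 q'.2.2 < L x 0 t + 1 :=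
      (hLc.comp (continuous_fst.prodMk (continuous_const.prodMk continuous_snd.snd))).continuousAt
        |>.eventually_lt continuousAt_const (lt_add_one _)
    filter_upwards [hp, hL0] with q' hq'p hq'L
    rw [mem_closedBall_zero_iff]
    have := norm_le_of_forall_inner_sub_le (fun v => hC q'.1 v q'.2.2) (by linarith)
      (hV q'.1 q'.2.1 q'.2.2)
    linarith

theorem hasGradientAt_Ham (hV : IsLegendreArgmax L V) (hVc : Continuous V) (x p : Evec n)
    (t : ℝ) : HasGradientAt (fun p' => Ham L x p' t) (V (x, p, t)) p := by
  refine hasGradientAt_of_subgradient (V := fun p' => V (x, p', t)) (fun p₁ p₂ => ?_)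
    (by fun_prop)
  have := hV x p₂ t (V (x, p₁, t))
  rw [hV.Ham_eq, hV.Ham_eq, real_inner_comm, inner_sub_left]
  linarith

end IsLegendreArgmax

theorem ACOn.mono {γ γ' : ℝ → Evec n} {S T : Set ℝ} (h : ACOn γ γ' T) (hST : S ⊆ T) :
    ACOn γ γ' S :=
  fun a ha b hb => h a (hST ha) b (hST hb)

theorem ACOn.congr_ae {γ γ' δ δ' : ℝ → Evec n} {S : Set ℝ} (h : ACOn γ γ' S)
    (hS : S.OrdConnected) (hγ : EqOn γ δ S) (hγ' : ∀ᵐ s, s ∈ S → γ' s = δ' s) :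
    ACOn δ δ' S := by
  intro c hc d hd
  obtain ⟨hint, heq⟩ := h c hc d hd
  have hae : ∀ᵐ s, s ∈ Ι c d → γ' s = δ' s :=
    hγ'.mono fun s hs hs' => hs (hS.uIcc_subset hc hd (uIoc_subset_uIcc hs'))
  refine ⟨hint.congr_ae ((ae_restrict_iff' measurableSet_uIoc).2 hae), ?_⟩
  rw [← hγ hc, ← hγ hd, heq, intervalIntegral.integral_congr_ae hae]

theorem ACOn.Iic_union_Icc {γ γ' : ℝ → Evec n} {a b : ℝ} (hab : a ≤ b)
    (h₁ : ACOn γ γ' (Iic a)) (h₂ : ACOn γ γ' (Icc a b)) : ACOn γ γ' (Iic b) := by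
  have hle : ∀ c ∈ Iic b, ∀ d ∈ Iic b, c ≤ d →
      IntervalIntegrable γ' volume c d ∧ γ d = γ c + ∫ τ in c..d, γ' τ := by
    intro c _ d hd hcd
    rcases le_total d a with hda | had
    · exact h₁ c (hcd.trans hda) d hda
    rcases le_total a c with hac | hca
    · exact h₂ c ⟨hac, hcd.trans hd⟩ d ⟨hac.trans hcd, hd⟩
    obtain ⟨hi₁, he₁⟩ := h₁ c hca a (mem_Iic.2 le_rfl)
    obtain ⟨hi₂, he₂⟩ := h₂ a ⟨le_rfl, hab⟩ d ⟨had, hd⟩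
    refine ⟨hi₁.trans hi₂, ?_⟩
    rw [← intervalIntegral.integral_add_adjacent_intervals hi₁ hi₂, he₂, he₁, add_assoc]
  intro c hc d hd
  rcases le_total c d with hcd | hdc
  · exact hle c hc d hd hcd
  · obtain ⟨hi, he⟩ := hle d hd c hc hdc
    refine ⟨hi.symm, ?_⟩
    rw [intervalIntegral.integral_symm, he]
    abel

theorem ACOn.Iic_glue {γ γ' X W : ℝ → Evec n} {a b : ℝ} (hab : a ≤ b) (hγ : ACOn γ γ' (Iic a))
    (hX : ACOn X W (Icc a b)) (hγX : γ a = X a) :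
    ACOn (fun s => if s ≤ a then γ s else X s) (fun s => if s ≤ a then γ' s else W s) (Iic b) := by
  have hX_Icc : EqOn X (fun s => if s ≤ a then γ s else X s) (Icc a b) := fun s hs => by
    rcases hs.1.eq_or_lt with rfl | has
    exacts [(if_pos le_rfl).trans hγX |>.symm, (if_neg has.not_ge).symm]
  refine (hγ.congr_ae ordConnected_Iic (fun s hs => (if_pos hs).symm)
    (ae_of_all _ fun s hs => (if_pos hs).symm)).Iic_union_Icc hab
    (hX.congr_ae ordConnected_Icc hX_Icc ?_)
  filter_upwards [Measure.ae_ne volume a] with s hsa hs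
  exact (if_neg (hs.1.lt_of_ne' hsa).not_ge).symm

theorem acOn_of_hasDerivWithinAt {X W : ℝ → Evec n} {I : Set ℝ} (hI : I.OrdConnected)
    (hX : ∀ s ∈ I, HasDerivWithinAt X (W s) I s) (hW : ContinuousOn W I) : ACOn X W I :=
  fun a ha b hb => ⟨(hW.mono (hI.uIcc_subset ha hb)).intervalIntegrable, by
    rw [integral_eq_sub_of_hasDerivWithinAt_of_ordConnected hI hX hW ha hb]; abel⟩

section WeakKAM

variable {F : ℝ → ℝ} {α : ℝ}

theorem wkSet_nonempty (hexp : ∀ t, IntegrableOn (fun s => exp (F s)) (Iic t))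
    {x : Evec n} (hL0c : Continuous fun s => L x 0 s)
    (hL0 : Bornology.IsBounded (range fun s => L x 0 s)) (t : ℝ) :
    (wkSet F L α x t).Nonempty := by
  obtain ⟨M, hM⟩ := isBounded_iff_forall_norm_le.1 hL0
  have hint : IntegrableOn (fun s => exp (F s - F t) * (L x 0 s + α)) (Iic t) := by
    simp_rw [exp_sub]
    refine ((hexp t).div_const _).mul_bdd (c := M + ‖α‖) (by fun_prop) (ae_of_all _ fun s => ?_)
    exact (norm_add_le _ _).trans (by gcongr; exact hM _ ⟨s, rfl⟩)
  exact ⟨_, fun _ => x, fun _ => 0, fun _ _ _ _ => ⟨intervalIntegrable_const, by simp⟩, rfl,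
    hint, rfl⟩

theorem wkSet_bddBelow (hexp : ∀ t, IntegrableOn (fun s => exp (F s)) (Iic t))
    {C : ℝ} (hC : ∀ x v t, -C ≤ L x v t) (x : Evec n) (t : ℝ) :
    BddBelow (wkSet F L α x t) := by
  refine ⟨∫ s in Iic t, exp (F s - F t) * (α - C), ?_⟩
  rintro r ⟨γ, γ', -, -, hint, rfl⟩
  have hlow : IntegrableOn (fun s => exp (F s - F t) * (α - C)) (Iic t) := by
    simp_rw [exp_sub]
    exact ((hexp t).div_const _).mul_const _
  refine setIntegral_mono_on hlow hint measurableSet_Iic fun s _ => ?_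
  have := hC (γ s) (γ' s) s
  gcongr
  linarith

theorem mem_wkSet_concat (hFc : Continuous F) {X W : ℝ → Evec n} {a b : ℝ} (hab : a ≤ b)
    (hXW : ACOn X W (Icc a b)) (hLXW : ContinuousOn (fun s => L (X s) (W s) s) (Icc a b))
    {r : ℝ} (hr : r ∈ wkSet F L α (X a) a) :
    (exp (F a) * r + ∫ s in a..b, exp (F s) * (L (X s) (W s) s + α)) / exp (F b) ∈
      wkSet F L α (X b) b := by
  obtain ⟨γ, γ', hγ, hγa, hint, rfl⟩ := hr
  set δ : ℝ → Evec n := fun s => if s ≤ a then γ s else X s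
  set δ' : ℝ → Evec n := fun s => if s ≤ a then γ' s else W s
  have hδb : δ b = X b := by
    rcases hab.eq_or_lt with rfl | hab'
    exacts [(if_pos le_rfl).trans hγa, if_neg hab'.not_ge]
  set Φ : ℝ → ℝ := fun s => exp (F s - F b) * (L (δ s) (δ' s) s + α)
  have hΦ_Iic : EqOn Φ (fun s => exp (F a - F b) * (exp (F s - F a) * (L (γ s) (γ' s) s + α)))
      (Iic a) := fun s hs => by
    simp only [Φ, δ, δ', if_pos (mem_Iic.1 hs), ← mul_assoc, ← exp_add]
    ring_nf
  have hΦ_Ioc : EqOn Φ (fun s => exp (F s) * (L (X s) (W s) s + α) / exp (F b)) (Ioc a b) :=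
    fun s hs => by
      simp only [Φ, δ, δ', if_neg hs.1.not_ge, exp_sub]
      ring
  have hint₁ : IntegrableOn Φ (Iic a) :=
    IntegrableOn.congr_fun (hint.const_mul _) hΦ_Iic.symm measurableSet_Iic
  have hint₂ : IntegrableOn Φ (Ioc a b) :=
    ((((hFc.rexp.continuousOn).mul (hLXW.add continuousOn_const)).div_const _).integrableOn_Icc
      |>.mono_set Ioc_subset_Icc_self).congr_fun hΦ_Ioc.symm measurableSet_Ioc
  refine ⟨δ, δ', hγ.Iic_glue hab hXW hγa, hδb, ?_, ?_⟩
  · rw [← Iic_union_Ioc_eq_Iic hab]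
    exact hint₁.union hint₂
  · rw [← Iic_union_Ioc_eq_Iic hab, setIntegral_union (Iic_disjoint_Ioc le_rfl) measurableSet_Ioc
      hint₁ hint₂, setIntegral_congr_fun measurableSet_Iic hΦ_Iic,
      setIntegral_congr_fun measurableSet_Ioc hΦ_Ioc, integral_const_mul, integral_div,
      ← intervalIntegral.integral_of_le hab, exp_sub, add_div]
    ring

theorem exp_mul_uWK_le (hFc : Continuous F) {X W : ℝ → Evec n} {a b : ℝ} (hab : a ≤ b)
    (hXW : ACOn X W (Icc a b)) (hLXW : ContinuousOn (fun s => L (X s) (W s) s) (Icc a b))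
    (hne : (wkSet F L α (X a) a).Nonempty) (hbdd : BddBelow (wkSet F L α (X b) b)) :
    exp (F b) * uWK F L α (X b) b ≤
      exp (F a) * uWK F L α (X a) a + ∫ s in a..b, exp (F s) * (L (X s) (W s) s + α) := by
  set A := ∫ s in a..b, exp (F s) * (L (X s) (W s) s + α)
  suffices (exp (F b) * uWK F L α (X b) b - A) / exp (F a) ≤ uWK F L α (X a) a by
    rw [div_le_iff₀ (exp_pos _)] at this
    linarith
  refine le_csInf hne fun r hr => ?_
  have : uWK F L α (X b) b ≤ _ := csInf_le hbdd (mem_wkSet_concat hFc hab hXW hLXW hr)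
  rw [le_div_iff₀ (exp_pos _)] at this
  rw [div_le_iff₀ (exp_pos _)]
  linarith

theorem antitoneOn_exp_mul_uWK_sub (hFc : Continuous F)
    (hexp : ∀ t, IntegrableOn (fun s => exp (F s)) (Iic t))
    (hLc : Continuous fun q : Evec n × Evec n × ℝ => L q.1 q.2.1 q.2.2)
    (hLbdd : ∀ x, Bornology.IsBounded (range fun s => L x 0 s)) {C : ℝ}
    (hC : ∀ x v t, -C ≤ L x v t) {I : Set ℝ} (hI : I.OrdConnected) {X W : ℝ → Evec n}
    (hX : ∀ s ∈ I, HasDerivWithinAt X (W s) I s) (hW : ContinuousOn W I) {Y : ℝ → ℝ}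
    (hY : ∀ s ∈ I, HasDerivWithinAt Y (exp (F s) * (L (X s) (W s) s + α)) I s) :
    AntitoneOn (fun t => exp (F t) * uWK F L α (X t) t - Y t) I := by
  intro a ha b hb hab
  have hXc : ContinuousOn X I := fun s hs => (hX s hs).continuousWithinAt
  have hLXW : ContinuousOn (fun s => L (X s) (W s) s) I :=
    hLc.comp_continuousOn (hXc.prodMk (hW.prodMk continuousOn_id))
  have hftc := integral_eq_sub_of_hasDerivWithinAt_of_ordConnected hI hY
    (hFc.rexp.continuousOn.mul (hLXW.add continuousOn_const)) ha hb
  have hsub : Icc a b ⊆ I := hI.out ha hb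
  have := exp_mul_uWK_le (α := α) hFc hab ((acOn_of_hasDerivWithinAt hI hX hW).mono hsub)
    (hLXW.mono hsub) (wkSet_nonempty hexp
      (hLc.comp (continuous_const.prodMk (continuous_const.prodMk continuous_id))) (hLbdd _) a)
    (wkSet_bddBelow hexp hC _ b)
  dsimp only
  linarith

end WeakKAM

end Lagrangian

theorem extended_flow_monotonicity_general
    (n : ℕ)
    (f F : ℝ → ℝ)
    (hf : Continuous f) (hfper : ∀ t, f (t + 1) = f t)
    (hfmean : 0 < ∫ t in (0:ℝ)..1, f t)
    (hF : ∀ t, F t = ∫ τ in (0:ℝ)..t, f τ)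
    (L : Evec n → Evec n → ℝ → ℝ)
    (hLsm : ContDiff ℝ 2 (fun q : Evec n × Evec n × ℝ => L q.1 q.2.1 q.2.2))
    (hLtper : ∀ (x v : Evec n) (t : ℝ), L x v (t + 1) = L x v t)
    (hLconv : ∀ (x : Evec n) (t : ℝ) (v w : Evec n), w ≠ 0 →
      0 < iteratedFDeriv ℝ 2 (fun v' => L x v' t) v ![w, w])
    (hLsuper : ∀ k : ℝ, 0 ≤ k → ∃ C : ℝ, ∀ x v t, k * ‖v‖ - C ≤ L x v t)
    (α : ℝ) (I : Set ℝ) (hI : I.OrdConnected)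
    (X P : ℝ → Evec n) (U : ℝ → ℝ)
    (hX : ∀ t ∈ I, HasDerivWithinAt X
      (gradient (fun p => Ham L (X t) p t) (P t)) I t)
    (hP : ∀ t ∈ I, HasDerivWithinAt P
      (-(gradient (fun y => Ham L y (P t) t) (X t)) - f t • P t) I t)
    (hU : ∀ t ∈ I, HasDerivWithinAt U
      (⟪gradient (fun p => Ham L (X t) p t) (P t), P t⟫
        - Ham L (X t) (P t) t + α - f t * U t) I t) :
    AntitoneOn (fun t => Real.exp (F t) * (uWK F L α (X t) t - U t)) I ∧
    ∀ t₀ ∈ I, ∀ t ∈ I, t₀ ≤ t →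
      uWK F L α (X t₀) t₀ ≤ U t₀ → uWK F L α (X t) t ≤ U t := by
  obtain rfl : F = fun t => ∫ τ in (0:ℝ)..t, f τ := funext hF
  have hLc := hLsm.continuous
  obtain ⟨V, hV⟩ := exists_isLegendreArgmax hLc hLsuper
  have hVc := hV.continuous hLc (fun x t => strictConvexOn_univ_of_iteratedFDeriv_two_pos
    (hLsm.comp (contDiff_const.prodMk (contDiff_id.prodMk contDiff_const))) (hLconv x t)) hLsuper
  have hgrad x p t := (hV.hasGradientAt_Ham hVc x p t).gradient
  simp only [hgrad] at hX hU
  have hXc : ContinuousOn X I := fun s hs => (hX s hs).continuousWithinAt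
  have hPc : ContinuousOn P I := fun s hs => (hP s hs).continuousWithinAt
  have hW : ContinuousOn (fun s => V (X s, P s, s)) I :=
    hVc.comp_continuousOn (hXc.prodMk (hPc.prodMk continuousOn_id))
  have hY s (hs : s ∈ I) :=
    ((hf.integral_hasStrictDerivAt 0 s).hasDerivAt.exp.hasDerivWithinAt (s := I)).mul (hU s hs)
  have hexp := integrableOn_exp_primitive_Iic hfper one_pos (hf.intervalIntegrable _ _) hfmean
  have hLbdd x := Function.Periodic.isBounded_of_continuous (hLtper x 0) one_ne_zero
    (hLc.comp (continuous_const.prodMk (continuous_const.prodMk continuous_id)))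
  obtain ⟨C, hC⟩ := hLsuper 0 le_rfl
  have hmono := antitoneOn_exp_mul_uWK_sub (α := α)
    (intervalIntegral.continuous_primitive hf.intervalIntegrable 0) hexp hLc hLbdd (C := C)
    (by simpa using hC) hI hX hW fun s hs => (hY s hs).congr_deriv <| by
      rw [hV.Ham_eq, real_inner_comm]; ring
  simp only [mul_sub]
  refine ⟨hmono, fun t₀ ht₀ t ht hle h₀ => ?_⟩
  have := (hmono ht₀ ht hle).trans (sub_nonpos.2 (mul_le_mul_of_nonneg_left h₀ (exp_pos _).le))
  exact le_of_mul_le_mul_left (sub_nonpos.1 this) (exp_pos _)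

/-- Monotonicity along the extended Hamiltonian flow: if
`(x,p,u)` solves the extended dissipative Hamiltonian system on an interval
`I`, then `t ↦ e^{F(t)}(u_α⁻(x(t),t) - u(t))` is non-increasing on `I`; in
particular once `u ≥ u_α⁻(x,·)` holds it persists forward in time. -/
theorem extended_flow_monotonicity
    (n : ℕ) (hn : 1 ≤ n)
    (f F : ℝ → ℝ)
    (hf : Continuous f) (hfper : ∀ t, f (t + 1) = f t)
    (hfmean : 0 < ∫ t in (0:ℝ)..1, f t)
    (hF : ∀ t, F t = ∫ τ in (0:ℝ)..t, f τ)
    (L : Evec n → Evec n → ℝ → ℝ)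
    (hLsm : ContDiff ℝ 2 (fun q : Evec n × Evec n × ℝ => L q.1 q.2.1 q.2.2))
    (hLxper : ∀ (k : Fin n → ℤ) (x v : Evec n) (t : ℝ), L (x + intVec k) v t = L x v t)
    (hLtper : ∀ (x v : Evec n) (t : ℝ), L x v (t + 1) = L x v t)
    (hLconv : ∀ (x : Evec n) (t : ℝ) (v w : Evec n), w ≠ 0 →
      0 < iteratedFDeriv ℝ 2 (fun v' => L x v' t) v ![w, w])
    (hLsuper : ∀ k : ℝ, 0 ≤ k → ∃ C : ℝ, ∀ x v t, k * ‖v‖ - C ≤ L x v t)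
    (α : ℝ) (I : Set ℝ) (hI : I.OrdConnected)
    (X P : ℝ → Evec n) (U : ℝ → ℝ)
    (hX : ∀ t ∈ I, HasDerivWithinAt X
      (gradient (fun p => Ham L (X t) p t) (P t)) I t)
    (hP : ∀ t ∈ I, HasDerivWithinAt P
      (-(gradient (fun y => Ham L y (P t) t) (X t)) - f t • P t) I t)
    (hU : ∀ t ∈ I, HasDerivWithinAt U
      (⟪gradient (fun p => Ham L (X t) p t) (P t), P t⟫
        - Ham L (X t) (P t) t + α - f t * U t) I t) :
    AntitoneOn (fun t => Real.exp (F t) * (uWK F L α (X t) t - U t)) I ∧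
    ∀ t₀ ∈ I, ∀ t ∈ I, t₀ ≤ t →
      uWK F L α (X t₀) t₀ ≤ U t₀ → uWK F L α (X t) t ≤ U t :=
  extended_flow_monotonicity_general n f F hf hfper hfmean hF L hLsm hLtper hLconv hLsuper α I hI X
    P U hX hP hU
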